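/- arXiv:2403.13604 — 2 statements merged into one kernel-verified Lean document; each statement's English description precedes it below -/
import Mathlib

section
/- For every N ∈ ℕ, the polynomials Ũ(q;N) = U(q;N) + ((−1)^N / 2)·{q}_N in ℚ[q] satisfy the functional equation 1 + (q − 1)·Ũ(q²;N) = Ũ(q;N+1), where Ũ(q²;N) is obtained by substituting q² for q. -/
open Polynomial

/-- The Mahler factorial `{q}_n = ∏_{j=0}^{n-1} (1 - q^{2^j})` as a polynomial in `ℚ[q]`. -/
noncomputable def mahlerFacP (n : ℕ) : Polynomial ℚ :=
  ∏ j ∈ Finset.range n, (1 - X ^ 2 ^ j)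

/-- The partial sum `U(q;N) = ∑_{n=0}^{N-1} (-1)^n {q}_n` in `ℚ[q]`. -/
noncomputable def UpartP (N : ℕ) : Polynomial ℚ :=
  ∑ n ∈ Finset.range N, (-1 : Polynomial ℚ) ^ n * mahlerFacP n

/-- `Ũ(q;N) = U(q;N) + ((-1)^N / 2) {q}_N` in `ℚ[q]`. -/
noncomputable def UtildeP (N : ℕ) : Polynomial ℚ :=
  UpartP N + C ((-1 : ℚ) ^ N / 2) * mahlerFacP N

lemma mahler_succ (n : ℕ) :
    mahlerFacP (n + 1) = mahlerFacP n * (1 - X ^ 2 ^ n) := by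
  rw [mahlerFacP, Finset.prod_range_succ, ← mahlerFacP]

lemma comp_key (n : ℕ) :
    (1 - X) * (mahlerFacP n).comp (X ^ 2) = mahlerFacP (n + 1) := by
  induction n with
  | zero => simp [mahlerFacP]
  | succ n ih =>
    rw [mahler_succ n] at ih
    rw [mahler_succ (n + 1), mahler_succ n, mul_comp]
    simp only [sub_comp, one_comp, pow_comp, X_comp, ← pow_mul, ← pow_succ]
    linear_combination (1 - X ^ 2 ^ (n + 1)) * ih

lemma Cneg (N : ℕ) : C ((-1 : ℚ) ^ (N + 1) / 2) = -C ((-1 : ℚ) ^ N / 2) := by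
  rw [show ((-1 : ℚ) ^ (N + 1) / 2) = -((-1 : ℚ) ^ N / 2) by rw [pow_succ]; ring, map_neg]

lemma Utilde_succ (N : ℕ) :
    UtildeP (N + 1) = UtildeP N + C ((-1 : ℚ) ^ N / 2) * X ^ 2 ^ N * mahlerFacP N := by
  rw [UtildeP, UtildeP, UpartP, Finset.sum_range_succ, ← UpartP, mahler_succ, Cneg,
    show ((-1 : Polynomial ℚ)) ^ N = C ((-1 : ℚ) ^ N) from by rw [map_pow, map_neg, map_one]]
  have h2 : (C ((-1 : ℚ) ^ N) : Polynomial ℚ) = C ((-1 : ℚ) ^ N / 2) + C ((-1 : ℚ) ^ N / 2) := by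
    rw [← map_add]; ring_nf
  rw [h2]; ring

theorem stmt8 (N : ℕ) :
    1 + (X - 1) * (UtildeP N).comp (X ^ 2) = UtildeP (N + 1) := by
  induction N with
  | zero =>
    simp [UtildeP, UpartP, mahlerFacP]
    rw [show (-1 : ℚ) / 2 = -2⁻¹ by norm_num, map_neg]; ring
  | succ N ih =>
    rw [Utilde_succ N, Utilde_succ (N + 1), Cneg, add_comp, mul_comp, mul_comp, C_comp,
      pow_comp, X_comp]
    rw [show ((X : Polynomial ℚ) ^ 2) ^ 2 ^ N = X ^ 2 ^ (N + 1) by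
      rw [← pow_mul, pow_succ, mul_comm (2 ^ N) 2, mul_comm 2 (2 ^ N)]]
    linear_combination ih - C ((-1 : ℚ) ^ N / 2) * X ^ 2 ^ (N + 1) * comp_key N
end

section
/- Let f(x) = ∑_{k=0}^{∞} c_k x^k be the unique formal power series over ℚ satisfying f(x) = 1 + x·f(2x + x²). Then for every k ∈ ℕ and every N ≥ k+1, k!·c_k equals the k-th derivative of the polynomial U(q;N) = ∑_{n=0}^{N-1} (−1)^n {q}_n evaluated at q = 1; i.e., the c_k are the coefficients of the expansion of U(q) in powers of q − 1. -/
open Polynomial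

/-!
Write `T_N(x) = U(1 + x; N)`. Since `{q}_{n+1} = (1 - q) {q²}_n`, the partial sums satisfy
`U(q; N+1) = 1 + (q - 1) U(q²; N)`, and `(1 + x)² = 1 + (2x + x²)` turns this into
`T_{N+1}(x) = 1 + x T_N(2x + x²)`, the functional equation of `f` truncated at degree `N`.
The coefficient of `x^{m+1}` on either side only involves coefficients of degree `≤ m`,
so induction on `N` shows that `f` and `T_N` agree below degree `N`.
-/

/-- Formal substitution of a polynomial `g` with zero constant term into a formal power
series `f`: the `n`-th coefficient of `f(g)` is `∑_{k=0}^{n} c_k · (coeff of xⁿ in gᵏ)`;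
since `g` has zero constant term, `gᵏ` contributes nothing to the coefficient of `xⁿ`
for `k > n`, so this is the full formal substitution. -/
noncomputable def substPoly (g : Polynomial ℚ) (f : PowerSeries ℚ) : PowerSeries ℚ :=
  PowerSeries.mk fun n =>
    ∑ k ∈ Finset.range (n + 1), PowerSeries.coeff k f * (g ^ k).coeff n

lemma coeff_comp_eq_sum_range {R : Type*} [CommSemiring R] (p g : R[X]) (hg : g.coeff 0 = 0)
    (m : ℕ) : (p.comp g).coeff m = ∑ j ∈ Finset.range (m + 1), p.coeff j * (g ^ j).coeff m := by
  have hpow : ∀ j, m < j → (g ^ j).coeff m = 0 := fun j hj =>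
    X_pow_dvd_iff.mp (pow_dvd_pow_of_dvd (X_dvd_iff.mpr hg) j) m hj
  rw [comp, eval₂_eq_sum_range' C (Nat.lt_add_of_pos_right (Nat.succ_pos m)), finsetSum_coeff]
  simp only [coeff_C_mul]
  refine (Finset.sum_subset (Finset.range_subset_range.mpr (by omega)) fun j _ hj => ?_).symm
  rw [hpow j (by simpa using hj), mul_zero]

lemma coeff_substPoly_eq_coeff_comp {g : ℚ[X]} (hg : g.coeff 0 = 0) {f : PowerSeries ℚ}
    {p : ℚ[X]} {n : ℕ} (h : ∀ j < n, PowerSeries.coeff j f = p.coeff j) {m : ℕ} (hm : m < n) :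
    PowerSeries.coeff m (substPoly g f) = (p.comp g).coeff m := by
  rw [substPoly, PowerSeries.coeff_mk, coeff_comp_eq_sum_range p g hg]
  exact Finset.sum_congr rfl fun j hj => by rw [h j (by simp at hj; omega)]

lemma mahlerFacP_succ (n : ℕ) :
    mahlerFacP (n + 1) = (mahlerFacP n).comp (X ^ 2) * (1 - X) := by
  rw [mahlerFacP, Finset.prod_range_succ', mahlerFacP, prod_comp]
  congr 1
  · refine Finset.prod_congr rfl fun j _ => ?_
    rw [sub_comp, one_comp, pow_comp, X_comp, ← pow_mul, pow_succ, mul_comm (2 ^ j) 2]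
  · simp

lemma UpartP_succ (N : ℕ) : UpartP (N + 1) = 1 + (X - 1) * (UpartP N).comp (X ^ 2) := by
  rw [UpartP, Finset.sum_range_succ', UpartP, sum_comp, Finset.mul_sum, add_comm]
  congr 1
  · simp [mahlerFacP]
  · refine Finset.sum_congr rfl fun n _ => ?_
    rw [mahlerFacP_succ, mul_comp, pow_comp, neg_comp, one_comp]
    ring

lemma taylor_one_UpartP_succ (N : ℕ) :
    taylor 1 (UpartP (N + 1)) = 1 + X * (taylor 1 (UpartP N)).comp (2 * X + X ^ 2) := by
  have hsq : ((X : ℚ[X]) ^ 2).comp (X + C 1) = (X + C 1 : ℚ[X]).comp (2 * X + X ^ 2) := by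
    simp only [pow_comp, X_comp, add_comp, C_1, one_comp]
    ring
  rw [UpartP_succ, map_add, taylor_one, taylor_mul, map_sub, taylor_X, taylor_one, taylor_apply,
    taylor_apply, comp_assoc, comp_assoc, hsq, C_1, add_sub_cancel_right]

lemma coeff_eq_coeff_taylor_one_UpartP (f : PowerSeries ℚ)
    (hf : f = 1 + PowerSeries.X * substPoly (2 * X + X ^ 2) f) (N : ℕ) :
    ∀ k < N, PowerSeries.coeff k f = (taylor 1 (UpartP N)).coeff k := by
  induction N with
  | zero => intro k hk; omega
  | succ N ih =>
    rintro (_ | m) hm <;> rw [hf, taylor_one_UpartP_succ]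
    · simp
    · simp only [map_add, PowerSeries.coeff_succ_X_mul, coeff_add, coeff_X_mul,
        PowerSeries.coeff_one, coeff_one, m.succ_ne_zero, if_false, zero_add]
      exact coeff_substPoly_eq_coeff_comp (by simp [coeff_X_pow]) ih (by omega)

lemma factorial_mul_coeff_taylor {R : Type*} [CommSemiring R] (p : R[X]) (r : R) (k : ℕ) :
    (k.factorial : R) * (taylor r p).coeff k = (derivative^[k] p).eval r := by
  rw [taylor_coeff, ← factorial_smul_hasseDeriv, LinearMap.smul_apply, eval_smul, nsmul_eq_mul]

theorem stmt18 (f : PowerSeries ℚ)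
    (hf : f = 1 + PowerSeries.X * substPoly (2 * X + X ^ 2) f)
    (k N : ℕ) (hN : k + 1 ≤ N) :
    (Nat.factorial k : ℚ) * PowerSeries.coeff k f
      = (derivative^[k] (UpartP N)).eval 1 := by
  rw [coeff_eq_coeff_taylor_one_UpartP f hf N k hN, factorial_mul_coeff_taylor]
end
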